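/- arXiv:2304.14379 — 2 statements merged into one kernel-verified Lean document; each statement's English description precedes it below -/
import Mathlib

section
/- Let F be a field, let n, k be natural numbers with k ≤ n, let H be an (n−k)×n matrix over F of full rank n−k, and let A ∈ GL_n(F) be any nonsingular matrix with H·A = H̃ = [I_{(n−k)×(n−k)} | 0_{(n−k)×k}]. Then for every T ∈ GL_n(F): Null(H·T) = Null(H) if and only if there exists Z ∈ Z(n,k) such that T = A·Z·A^{−1}. In other words, the group of nonsingular matrices preserving the null space of H is exactly the conjugate A·Z(n,k)·A^{−1}. -/
open Matrix

/-- `H̃ = [I_{(n-k)×(n-k)} | 0_{(n-k)×k}]`. -/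
def Htilde (F : Type*) [Field F] (n k : ℕ) : Matrix (Fin (n - k)) (Fin n) F :=
  fun i j => if (j : ℕ) = (i : ℕ) then 1 else 0

/-- `Z(n,k)`: invertible matrices whose upper-right `(n-k)×k` block vanishes. -/
def blockLowerTriangularSet (F : Type*) [Field F] (n k : ℕ) : Set (GL (Fin n) F) :=
  {Z | ∀ i j : Fin n, (i : ℕ) < n - k → n - k ≤ (j : ℕ) →
        (Z : Matrix (Fin n) (Fin n) F) i j = 0}

lemma htilde_mulVec {F : Type*} [Field F] {n k : ℕ} (v : Fin n → F) (i : Fin (n - k)) :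
    (Htilde F n k).mulVec v i = v (Fin.castLE (Nat.sub_le n k) i) := by
  unfold Htilde
  simp only [mulVec, dotProduct, ite_mul, one_mul, zero_mul]
  rw [Finset.sum_eq_single (Fin.castLE (Nat.sub_le n k) i)]
  · simp
  · intro b _ hb
    rw [if_neg]
    intro h
    exact hb (Fin.ext (by simpa using h))
  · simp

lemma htilde_mulVec_eq_zero {F : Type*} [Field F] {n k : ℕ} (v : Fin n → F) :
    (Htilde F n k).mulVec v = 0 ↔ ∀ j : Fin n, (j : ℕ) < n - k → v j = 0 := by
  constructor
  · intro h j hj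
    have := congrFun h ⟨(j : ℕ), hj⟩
    rw [htilde_mulVec] at this
    simpa [Fin.ext_iff] using this
  · intro h
    funext i
    rw [htilde_mulVec]
    exact h _ (by simp [i.isLt])

/-- for a full-rank parity-check matrix `H` and any code characterization
matrix `A` (i.e. `H·A = H̃`), a matrix `T ∈ GL_n(F)` satisfies `Null(H·T) = Null(H)`
iff `T = A·Z·A⁻¹` for some `Z ∈ Z(n,k)`; the group preserving `Null(H)` is exactly the
conjugate `A·Z(n,k)·A⁻¹`. -/
theorem null_space_preserving_iff_conjugate_block
    {F : Type*} [Field F] (n k : ℕ) (hk : k ≤ n)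
    (H : Matrix (Fin (n - k)) (Fin n) F) (hH : H.rank = n - k)
    (A : GL (Fin n) F) (hA : H * (A : Matrix (Fin n) (Fin n) F) = Htilde F n k)
    (T : GL (Fin n) F) :
    {x : Fin n → F | (H * (T : Matrix (Fin n) (Fin n) F)).mulVec x = 0} =
        {x : Fin n → F | H.mulVec x = 0} ↔
      ∃ Z ∈ blockLowerTriangularSet F n k, T = A * Z * A⁻¹ := by
  have hHeq : H = Htilde F n k * (↑A⁻¹ : Matrix (Fin n) (Fin n) F) := by
    rw [← hA, Matrix.mul_assoc, A.mul_inv, Matrix.mul_one]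
  constructor
  · intro hset
    refine ⟨A⁻¹ * T * A, ?_, by group⟩
    intro i j hi hj
    set x : Fin n → F := (↑A : Matrix (Fin n) (Fin n) F) *ᵥ Pi.single j 1 with hx
    have hxH : H *ᵥ x = 0 := by
      rw [hx, mulVec_mulVec, hA, htilde_mulVec_eq_zero]
      intro j' hj'
      have hne : j' ≠ j := by intro h; subst h; omega
      simp [Pi.single_apply, hne]
    have hxHT : (H * (↑T : Matrix (Fin n) (Fin n) F)) *ᵥ x = 0 :=
      (Set.ext_iff.mp hset x).mpr hxH
    have key : (Htilde F n k) *ᵥ ((↑A⁻¹ : Matrix (Fin n) (Fin n) F) *ᵥ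
        ((↑T : Matrix (Fin n) (Fin n) F) *ᵥ x)) = 0 := by
      rw [mulVec_mulVec, mulVec_mulVec, ← hHeq]
      exact hxHT
    rw [htilde_mulVec_eq_zero] at key
    have hZcoe : (↑(A⁻¹ * T * A) : Matrix (Fin n) (Fin n) F)
        = (↑A⁻¹ : Matrix (Fin n) (Fin n) F) * (↑T : Matrix (Fin n) (Fin n) F)
            * (↑A : Matrix (Fin n) (Fin n) F) := by
      simp [Units.val_mul]
    rw [hZcoe]
    have : ((↑A⁻¹ : Matrix (Fin n) (Fin n) F) * (↑T : Matrix (Fin n) (Fin n) F)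
            * (↑A : Matrix (Fin n) (Fin n) F)) *ᵥ Pi.single j (1 : F)
        = (↑A⁻¹ : Matrix (Fin n) (Fin n) F) *ᵥ ((↑T : Matrix (Fin n) (Fin n) F) *ᵥ x) := by
      rw [hx, mulVec_mulVec, mulVec_mulVec]
    have h0 := key i hi
    rw [← this, mulVec_single] at h0
    simpa using h0
  · rintro ⟨Z, hZ, rfl⟩
    set Tm : Matrix (Fin n) (Fin n) F := ↑(A * Z * A⁻¹) with hTm
    have hTcoe : Tm = (↑A : Matrix (Fin n) (Fin n) F) * (↑Z : Matrix (Fin n) (Fin n) F)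
        * (↑A⁻¹ : Matrix (Fin n) (Fin n) F) := by
      simp [hTm, Units.val_mul]
    -- T maps Null(H) into Null(H)
    have hmat : H * Tm = Htilde F n k * (↑Z : Matrix (Fin n) (Fin n) F)
        * (↑A⁻¹ : Matrix (Fin n) (Fin n) F) := by
      rw [hTcoe, hHeq, Matrix.mul_assoc (Htilde F n k),
        ← Matrix.mul_assoc (↑A⁻¹ : Matrix (Fin n) (Fin n) F),
        ← Matrix.mul_assoc (↑A⁻¹ : Matrix (Fin n) (Fin n) F), A.inv_mul, Matrix.one_mul,
        ← Matrix.mul_assoc]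
    have hstep : ∀ x : Fin n → F, H *ᵥ x = 0 → H *ᵥ (Tm *ᵥ x) = 0 := by
      intro x hx
      have hy : ∀ j : Fin n, (j : ℕ) < n - k →
          ((↑A⁻¹ : Matrix (Fin n) (Fin n) F) *ᵥ x) j = 0 := by
        rw [hHeq, ← mulVec_mulVec, htilde_mulVec_eq_zero] at hx
        exact hx
      have hz : (Htilde F n k) *ᵥ ((↑Z : Matrix (Fin n) (Fin n) F) *ᵥ
          ((↑A⁻¹ : Matrix (Fin n) (Fin n) F) *ᵥ x)) = 0 := by
        rw [htilde_mulVec_eq_zero]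
        intro j hj
        rw [mulVec, dotProduct]
        apply Finset.sum_eq_zero
        intro b _
        by_cases hb : (b : ℕ) < n - k
        · rw [hy b hb, mul_zero]
        · rw [hZ j b hj (not_lt.mp hb), zero_mul]
      rw [mulVec_mulVec, mulVec_mulVec] at hz
      rw [mulVec_mulVec, hmat]
      exact hz
    -- linear equivalence given by T
    let e : (Fin n → F) ≃ₗ[F] (Fin n → F) :=
      LinearEquiv.ofLinear (Matrix.mulVecLin Tm)
        (Matrix.mulVecLin (↑(A * Z * A⁻¹)⁻¹ : Matrix (Fin n) (Fin n) F))
        (by rw [← Matrix.mulVecLin_mul, hTm, Units.mul_inv, Matrix.mulVecLin_one])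
        (by rw [← Matrix.mulVecLin_mul, hTm, Units.inv_mul, Matrix.mulVecLin_one])
    have he : ∀ x, e x = Tm *ᵥ x := fun x => rfl
    set V : Submodule F (Fin n → F) := LinearMap.ker (Matrix.mulVecLin H) with hV
    have hVmem : ∀ x, x ∈ V ↔ H *ᵥ x = 0 := fun x => LinearMap.mem_ker
    have hmaple : Submodule.map (e : (Fin n → F) →ₗ[F] (Fin n → F)) V ≤ V := by
      intro v hv
      obtain ⟨y, hy, rfl⟩ := Submodule.mem_map.mp hv
      refine LinearMap.mem_ker.mpr ?_
      show H.mulVecLin (e y) = 0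
      rw [Matrix.mulVecLin_apply, he]
      exact hstep y (LinearMap.mem_ker.mp hy)
    have hmapeq : Submodule.map (e : (Fin n → F) →ₗ[F] (Fin n → F)) V = V := by
      apply Submodule.eq_of_le_of_finrank_le hmaple
      rw [LinearEquiv.finrank_map_eq]
    ext x
    simp only [Set.mem_setOf_eq]
    rw [← mulVec_mulVec]
    constructor
    · intro hx
      have hmem : e x ∈ V := by rw [hVmem, he]; exact hx
      rw [← hmapeq] at hmem
      obtain ⟨y, hy, hyx⟩ := hmem
      have : y = x := e.injective (by rwa [LinearEquiv.coe_coe] at hyx)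
      rw [← this]
      exact (hVmem y).mp hy
    · intro hx
      exact hstep x hx
end

section
/- For all real numbers a and b, the magnitude of the box-plus combination is bounded by the magnitude of each argument: |2 · artanh(tanh(a/2) · tanh(b/2))| ≤ min(|a|, |b|). In particular, combining an LLR with an additional finite LLR via the box-plus operation never increases its magnitude (reliability). -/
/-- The inverse hyperbolic tangent on `(-1, 1)`:
`artanh x = (1/2) · log((1 + x)/(1 - x))`. -/
noncomputable def artanh (x : ℝ) : ℝ := Real.log ((1 + x) / (1 - x)) / 2

lemma one_add_tanh (t : ℝ) : 1 + Real.tanh t = Real.exp t / Real.cosh t := by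
  rw [Real.tanh_eq_sinh_div_cosh, ← Real.cosh_add_sinh]
  field_simp [(Real.cosh_pos t).ne']

lemma one_sub_tanh (t : ℝ) : 1 - Real.tanh t = Real.exp (-t) / Real.cosh t := by
  rw [Real.tanh_eq_sinh_div_cosh, ← Real.cosh_sub_sinh]
  field_simp [(Real.cosh_pos t).ne']

lemma tanh_lt_one' (t : ℝ) : Real.tanh t < 1 := by
  have h := one_sub_tanh t
  nlinarith [Real.exp_pos (-t), Real.cosh_pos t, div_pos (Real.exp_pos (-t)) (Real.cosh_pos t)]

lemma neg_one_lt_tanh' (t : ℝ) : -1 < Real.tanh t := by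
  have h := one_add_tanh t
  nlinarith [div_pos (Real.exp_pos t) (Real.cosh_pos t)]

lemma artanh_tanh (t : ℝ) : artanh (Real.tanh t) = t := by
  rw [artanh, one_add_tanh, one_sub_tanh]
  rw [div_div_div_comm, div_self (Real.cosh_pos t).ne', ← Real.exp_sub, div_one]
  rw [Real.log_exp]; ring

lemma abs_artanh_le {u v : ℝ} (hu : |u| ≤ v) (hv : v < 1) : |artanh u| ≤ artanh v := by
  have h1 : (0:ℝ) < 1 - v := by linarith
  have h2 : (0:ℝ) < 1 + v := by
    have := abs_nonneg u; linarith
  have hu1 : -v ≤ u := (abs_le.mp hu).1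
  have hu2 : u ≤ v := (abs_le.mp hu).2
  have h3 : (0:ℝ) < 1 - u := by linarith
  have h4 : (0:ℝ) < 1 + u := by linarith
  have hRpos : (0:ℝ) < (1 + v) / (1 - v) := div_pos h2 h1
  have hrpos : (0:ℝ) < (1 + u) / (1 - u) := div_pos h4 h3
  rw [artanh, artanh, abs_div]
  have : |(2:ℝ)| = 2 := by norm_num
  rw [this]
  apply div_le_div_of_nonneg_right _ (by norm_num)
  rw [abs_le]
  constructor
  · rw [← Real.log_inv]
    apply Real.log_le_log (by positivity)
    rw [inv_div, div_le_div_iff₀ h2 h3]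
    nlinarith
  · apply Real.log_le_log hrpos
    rw [div_le_div_iff₀ h3 h1]
    nlinarith

lemma abs_tanh (t : ℝ) : |Real.tanh t| = Real.tanh |t| := by
  rcases le_or_gt 0 t with h | h
  · rw [abs_of_nonneg h, abs_of_nonneg]
    rw [Real.tanh_eq_sinh_div_cosh]
    exact div_nonneg (by rwa [Real.sinh_nonneg_iff]) (Real.cosh_pos t).le
  · rw [abs_of_neg h, show Real.tanh (-t) = -Real.tanh t from Real.tanh_neg t, ← abs_neg, abs_of_nonneg]
    rw [← Real.tanh_neg]
    rw [Real.tanh_eq_sinh_div_cosh]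
    exact div_nonneg (by rw [Real.sinh_nonneg_iff]; linarith) (Real.cosh_pos _).le

lemma key (a b : ℝ) : |2 * artanh (Real.tanh (a / 2) * Real.tanh (b / 2))| ≤ |a| := by
  have hb : |Real.tanh (b / 2)| ≤ 1 := by
    rw [abs_le]; exact ⟨(neg_one_lt_tanh' _).le, (tanh_lt_one' _).le⟩
  have hu : |Real.tanh (a / 2) * Real.tanh (b / 2)| ≤ Real.tanh (|a| / 2) := by
    rw [abs_mul]
    calc |Real.tanh (a/2)| * |Real.tanh (b/2)| ≤ |Real.tanh (a/2)| * 1 :=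
          mul_le_mul_of_nonneg_left hb (abs_nonneg _)
      _ = Real.tanh (|a/2|) := by rw [mul_one, abs_tanh]
      _ = Real.tanh (|a|/2) := by rw [abs_div, abs_two]
  have hv : Real.tanh (|a| / 2) < 1 := tanh_lt_one' _
  have := abs_artanh_le hu hv
  rw [artanh_tanh] at this
  rw [abs_mul, abs_two]
  linarith

/-- the magnitude of the box-plus combination
`a ⊞ b = 2 · artanh(tanh(a/2) · tanh(b/2))` is bounded by the magnitude of each
argument: `|a ⊞ b| ≤ min(|a|, |b|)`. -/
theorem abs_boxplus_le_min
    (a b : ℝ) :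
    |2 * artanh (Real.tanh (a / 2) * Real.tanh (b / 2))| ≤ min |a| |b| := by
  refine le_min (key a b) ?_
  have := key b a
  rwa [mul_comm (Real.tanh (b/2))] at this
end
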